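/- arXiv:1706.06766 — 4 statements merged into one kernel-verified Lean document; each statement's English description precedes it below -/
import Mathlib

section
/- Let λ ∈ ℝ and let g : [−1,1] → ℝ be twice continuously differentiable and satisfy ((1−t²) g'(t))' = λ(1−e^{g(t)}) for all t ∈ [−1,1]. Then λ(6−λ) ∫_{−1}^{1} (3t²−1) e^{g(t)} dt = 3 ∫_{−1}^{1} (1−t²)² g'(t)² dt. -/
open Real MeasureTheory

noncomputable section

/-- Euclidean Laplacian on ℝ² via the second iterated derivative. -/
def lap (w : ℝ × ℝ → ℝ) (y : ℝ × ℝ) : ℝ :=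
  iteratedFDeriv ℝ 2 w y ![(1, 0), (1, 0)] + iteratedFDeriv ℝ 2 w y ![(0, 1), (0, 1)]

/-- The unit sphere S² ⊂ ℝ³ (vectors encoded as functions `Fin 3 → ℝ`). -/
def sphere3 : Set (Fin 3 → ℝ) := {x | x 0 ^ 2 + x 1 ^ 2 + x 2 ^ 2 = 1}

/-- Inverse stereographic projection from the north pole. -/
def stereoN (y : ℝ × ℝ) : Fin 3 → ℝ :=
  ![2 * y.1 / (1 + y.1 ^ 2 + y.2 ^ 2), 2 * y.2 / (1 + y.1 ^ 2 + y.2 ^ 2),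
    (y.1 ^ 2 + y.2 ^ 2 - 1) / (1 + y.1 ^ 2 + y.2 ^ 2)]

/-- South-pole parametrization of the sphere. -/
def stereoS (y : ℝ × ℝ) : Fin 3 → ℝ :=
  ![2 * y.1 / (1 + y.1 ^ 2 + y.2 ^ 2), 2 * y.2 / (1 + y.1 ^ 2 + y.2 ^ 2),
    (1 - y.1 ^ 2 - y.2 ^ 2) / (1 + y.1 ^ 2 + y.2 ^ 2)]

/-- `u` is a solution of the mean field equation `Δu = lam (1 - e^u)` on `S²`,
expressed in the two stereographic charts. -/
def IsMFSolution (lam : ℝ) (u : (Fin 3 → ℝ) → ℝ) : Prop :=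
  ContinuousOn u sphere3 ∧
  ContDiff ℝ 2 (fun y => u (stereoN y)) ∧
  ContDiff ℝ 2 (fun y => u (stereoS y)) ∧
  (∀ y : ℝ × ℝ, lap (fun z => u (stereoN z)) y =
    4 * lam * (1 - Real.exp (u (stereoN y))) / (1 + y.1 ^ 2 + y.2 ^ 2) ^ 2) ∧
  (∀ y : ℝ × ℝ, lap (fun z => u (stereoS z)) y =
    4 * lam * (1 - Real.exp (u (stereoS y))) / (1 + y.1 ^ 2 + y.2 ^ 2) ^ 2)

/-- `u` is axially symmetric on `S²`: constant on the level sets of `⟨·, e⟩`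
for some unit vector `e`. -/
def AxiallySymmetric (u : (Fin 3 → ℝ) → ℝ) : Prop :=
  ∃ e : Fin 3 → ℝ, e 0 ^ 2 + e 1 ^ 2 + e 2 ^ 2 = 1 ∧
    ∀ x ∈ sphere3, ∀ x' ∈ sphere3,
      x 0 * e 0 + x 1 * e 1 + x 2 * e 2 = x' 0 * e 0 + x' 1 * e 1 + x' 2 * e 2 →
      u x = u x'

/-- Surface integral over `S²`, written in the north-pole stereographic chart. -/
def sphereIntegral (f : (Fin 3 → ℝ) → ℝ) : ℝ :=
  ∫ y : ℝ × ℝ, f (stereoN y) * (4 / (1 + y.1 ^ 2 + y.2 ^ 2) ^ 2)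

open Set

/-! The axially symmetric mean field equation is the divergence-form ODE `h' = λ(1 - e^g)` for the
flux `h = (1 - t²) g'`. The identity is the integral of the exact derivative of the Pohozaev-type
function `P = λ(3t² - 1)h - 6λ t(1 - t²)e^g - 3t h²`, which vanishes at `t = ±1` because every term
carries a factor `1 - t²`: one finds `P' = λ(6 - λ)(3t² - 1)e^g - 3h² + λ²(3t² - 1)`, and the last
term integrates to zero. -/

theorem integral_three_mul_sq_sub_one : ∫ t in (-1 : ℝ)..1, (3 * t ^ 2 - 1) = 0 := by
  have hint : IntervalIntegrable (fun t : ℝ => 3 * t ^ 2) volume (-1) 1 :=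
    (by fun_prop : Continuous fun t : ℝ => 3 * t ^ 2).intervalIntegrable _ _
  rw [intervalIntegral.integral_sub hint intervalIntegrable_const,
    intervalIntegral.integral_const_mul, integral_pow, intervalIntegral.integral_const]
  norm_num

theorem DifferentiableOn.hasDerivAt_derivWithin_of_mem_Ioo {E : Type*} [NormedAddCommGroup E]
    [NormedSpace ℝ E] {f : ℝ → E} {a b t : ℝ} (hf : DifferentiableOn ℝ f (Icc a b))
    (ht : t ∈ Ioo a b) : HasDerivAt f (derivWithin f (Icc a b) t) t :=
  (hf t (Ioo_subset_Icc_self ht)).hasDerivWithinAt.hasDerivAt (Icc_mem_nhds ht.1 ht.2)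

def pohozaevFn (lam : ℝ) (g φ : ℝ → ℝ) (t : ℝ) : ℝ :=
  lam * (3 * t ^ 2 - 1) * ((1 - t ^ 2) * φ t) - 6 * lam * t * (1 - t ^ 2) * exp (g t)
    - 3 * t * ((1 - t ^ 2) * φ t) ^ 2

theorem pohozaevFn_neg_one (lam : ℝ) (g φ : ℝ → ℝ) : pohozaevFn lam g φ (-1) = 0 := by
  simp [pohozaevFn]

theorem pohozaevFn_one (lam : ℝ) (g φ : ℝ → ℝ) : pohozaevFn lam g φ 1 = 0 := by
  simp [pohozaevFn]

theorem hasDerivAt_pohozaevFn {lam : ℝ} {g φ : ℝ → ℝ} {t : ℝ} (hg : HasDerivAt g (φ t) t)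
    (hflux : HasDerivAt (fun s => (1 - s ^ 2) * φ s) (lam * (1 - exp (g t))) t) :
    HasDerivAt (pohozaevFn lam g φ)
      (lam * (6 - lam) * ((3 * t ^ 2 - 1) * exp (g t)) - 3 * ((1 - t ^ 2) ^ 2 * φ t ^ 2)
        + lam ^ 2 * (3 * t ^ 2 - 1)) t := by
  have key : HasDerivAt (pohozaevFn lam g φ) _ t :=
    ((((hasDerivAt_pow 2 t).const_mul 3).sub_const 1).const_mul lam |>.mul hflux).sub
      ((((hasDerivAt_id t).const_mul (6 * lam)).mul ((hasDerivAt_pow 2 t).const_sub 1)).mul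
        hg.exp) |>.sub (((hasDerivAt_id t).const_mul 3).mul (hflux.pow 2))
  refine key.congr_deriv ?_
  simp only [Pi.mul_apply, id]
  ring

theorem kazdan_warner_identity_of_hasDerivAt {lam : ℝ} {g φ : ℝ → ℝ}
    (hg : ContinuousOn g (Icc (-1) 1)) (hφ : ContinuousOn φ (Icc (-1) 1))
    (hg' : ∀ t ∈ Ioo (-1 : ℝ) 1, HasDerivAt g (φ t) t)
    (hflux : ∀ t ∈ Ioo (-1 : ℝ) 1,
      HasDerivAt (fun s => (1 - s ^ 2) * φ s) (lam * (1 - exp (g t))) t) :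
    lam * (6 - lam) * ∫ t in (-1 : ℝ)..1, (3 * t ^ 2 - 1) * exp (g t) =
      3 * ∫ t in (-1 : ℝ)..1, (1 - t ^ 2) ^ 2 * φ t ^ 2 := by
  have hint {f : ℝ → ℝ} (hf : ContinuousOn f (Icc (-1) 1)) : IntervalIntegrable f volume (-1) 1 :=
    hf.intervalIntegrable_of_Icc (by norm_num)
  have hP : ∫ t in (-1 : ℝ)..1, (lam * (6 - lam) * ((3 * t ^ 2 - 1) * exp (g t))
      - 3 * ((1 - t ^ 2) ^ 2 * φ t ^ 2) + lam ^ 2 * (3 * t ^ 2 - 1)) = 0 := by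
    rw [intervalIntegral.integral_eq_sub_of_hasDerivAt_of_le (by norm_num)
      (by unfold pohozaevFn; fun_prop) (fun t ht => hasDerivAt_pohozaevFn (hg' t ht) (hflux t ht)) (hint (by fun_prop)),
      pohozaevFn_one, pohozaevFn_neg_one, sub_zero]
  rw [intervalIntegral.integral_add (hint (by fun_prop)) (hint (by fun_prop)),
    intervalIntegral.integral_sub (hint (by fun_prop)) (hint (by fun_prop)),
    intervalIntegral.integral_const_mul, intervalIntegral.integral_const_mul,
    intervalIntegral.integral_const_mul, integral_three_mul_sq_sub_one] at hP
  linarith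

/-- The Kazdan–Warner-type identity with the second spherical harmonic
`F = 3t² - 1`, reduced to axially symmetric functions: if `((1 - t²) g')' = λ(1 - e^g)`
on `[-1, 1]`, then `λ(6 - λ) ∫_{-1}^{1} (3t² - 1) e^g dt = 3 ∫_{-1}^{1} (1 - t²)² g'² dt`. -/
theorem kazdan_warner_second_harmonic_axisym (lam : ℝ) (g : ℝ → ℝ)
    (hg : ContDiffOn ℝ 2 g (Set.Icc (-1 : ℝ) 1))
    (hode : ∀ t ∈ Set.Icc (-1 : ℝ) 1,
      derivWithin (fun s => (1 - s ^ 2) * derivWithin g (Set.Icc (-1 : ℝ) 1) s)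
          (Set.Icc (-1 : ℝ) 1) t = lam * (1 - Real.exp (g t))) :
    lam * (6 - lam) * ∫ t in (-1 : ℝ)..1, (3 * t ^ 2 - 1) * Real.exp (g t) =
      3 * ∫ t in (-1 : ℝ)..1, (1 - t ^ 2) ^ 2 * (derivWithin g (Set.Icc (-1 : ℝ) 1) t) ^ 2 := by
  set φ := derivWithin g (Icc (-1 : ℝ) 1)
  have hφ : ContDiffOn ℝ 1 φ (Icc (-1) 1) := hg.derivWithin (uniqueDiffOn_Icc (by norm_num)) le_rfl
  have hflux : DifferentiableOn ℝ (fun s => (1 - s ^ 2) * φ s) (Icc (-1) 1) :=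
    (by fun_prop : Differentiable ℝ fun s : ℝ => 1 - s ^ 2).differentiableOn.mul
      (hφ.differentiableOn one_ne_zero)
  refine kazdan_warner_identity_of_hasDerivAt hg.continuousOn hφ.continuousOn
    (fun t ht => (hg.differentiableOn two_ne_zero).hasDerivAt_derivWithin_of_mem_Ioo ht)
    (fun t ht => ?_)
  rw [← hode t (Ioo_subset_Icc_self ht)]
  exact hflux.hasDerivAt_derivWithin_of_mem_Ioo ht
end
end

section
/- Let u be a solution of the mean field equation Δu = λ(1−e^u) on S² with λ = 6. If u is axially symmetric, i.e. there exists a unit vector e ∈ ℝ³ such that u(x) = u(x') whenever ⟨x,e⟩ = ⟨x',e⟩, then u ≡ 0. -/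
open Real MeasureTheory

noncomputable section

open Set Filter Topology Matrix

/-!
Axial symmetry gives `u x = v ⟨x, e⟩`, and the chart equation becomes the ODE
`((1 - t²) v')' = 6 (1 - eᵛ)` on `(-1, 1)` with `v` bounded. For `z = (1 - t²) v'`, the
function `G = t (1 - t²) z' - (1 - 3t²) z - t z² / 2` satisfies `G' = -z² / 2`. Since `z'` is
bounded, `z` has a limit at `1`, and it is `0` because otherwise `v` would grow like a multiple
of `-log (1 - t)`; so `G → 0` at `1`. Being nonincreasing, `G ≥ 0`, and the same argument for
`t ↦ v (-t)` gives `G ≤ 0`. Hence `z ≡ 0`, so `6 (1 - eᵛ) = z' ≡ 0`.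
-/

lemma exists_lt_of_div_one_sub_le_deriv {v v' : ℝ → ℝ} {ε t₁ : ℝ} (hε : 0 < ε)
    (hv : ∀ t ∈ Ioo t₁ 1, HasDerivAt v (v' t) t)
    (hlow : ∀ t ∈ Ioo t₁ 1, ε / (1 - t) ≤ v' t) (ht₁ : t₁ < 1) (M : ℝ) :
    ∃ t ∈ Ioo t₁ 1, M < v t := by
  set ψ : ℝ → ℝ := fun t => v t + ε * log (1 - t)
  -- `ψ' = v' - ε / (1 - t) ≥ 0`, while `ε log (1 - t) → -∞`
  have hψ : ∀ t ∈ Ioo t₁ 1, HasDerivAt ψ (v' t - ε / (1 - t)) t := fun t ht => by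
    have hlog := ((hasDerivAt_id t).const_sub 1).log (by simp; linarith [ht.2])
    exact ((hv t ht).add (hlog.const_mul ε)).congr_deriv (by simp only [id]; ring)
  have hmono : MonotoneOn ψ (Ioo t₁ 1) := by
    refine monotoneOn_of_deriv_nonneg (convex_Ioo _ _)
      (fun t ht => (hψ t ht).continuousAt.continuousWithinAt) (fun t ht => ?_) (fun t ht => ?_)
      <;> rw [interior_Ioo] at ht
    · exact (hψ t ht).differentiableAt.differentiableWithinAt
    · rw [(hψ t ht).deriv]
      linarith [hlow t ht]
  set s := (t₁ + 1) / 2 with hs_def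
  have hs : s ∈ Ioo t₁ 1 := by constructor <;> linarith
  have hlog : Tendsto (fun t => ε * log (1 - t)) (𝓝[<] 1) atBot := by
    refine (tendsto_log_nhdsGT_zero.comp ?_).const_mul_atBot hε
    refine tendsto_nhdsWithin_of_tendsto_nhds_of_eventually_within _ ?_ ?_
    · exact ((continuous_const.sub continuous_id).tendsto' (1:ℝ) 0 (by simp)).mono_left
        nhdsWithin_le_nhds
    · filter_upwards [self_mem_nhdsWithin] with t (ht : t < 1)
      simpa using ht
  obtain ⟨t, hts, ht⟩ := (Eventually.and (Ioo_mem_nhdsLT hs.2)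
    (hlog.eventually_lt_atBot (ψ s - M))).exists
  refine ⟨t, ⟨hs.1.trans hts.1, hts.2⟩, ?_⟩
  have := hmono hs ⟨hs.1.trans hts.1, hts.2⟩ hts.1.le
  simp only [ψ] at this ht ⊢
  linarith

lemma eq_zero_of_tendsto_one_sub_sq_mul_deriv {v v' : ℝ → ℝ} {M l : ℝ}
    (hv : ∀ t ∈ Ioo (-1) 1, HasDerivAt v (v' t) t) (hbd : ∀ t ∈ Ioo (-1) 1, |v t| ≤ M)
    (hl : Tendsto (fun t => (1 - t ^ 2) * v' t) (𝓝[<] 1) (𝓝 l)) : l = 0 := by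
  by_contra hne
  wlog hpos : 0 < l generalizing v v' l
  · refine this (v := -v) (v' := -v') (l := -l) (fun t ht => (hv t ht).neg) (by simpa using hbd)
      (by simpa using hl.neg) (neg_ne_zero.mpr hne)
      (neg_pos.mpr (lt_of_le_of_ne (not_lt.mp hpos) hne))
  have hev : ∀ᶠ t in 𝓝[<] 1, t ∈ Ioo 0 1 ∧ l / 2 < (1 - t ^ 2) * v' t :=
    Eventually.and (Ioo_mem_nhdsLT one_pos) (hl.eventually_const_lt (half_lt_self hpos))
  obtain ⟨t₁, ht₁, hsub⟩ := mem_nhdsLT_iff_exists_Ioo_subset.mp hev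
  have hI : ∀ t ∈ Ioo t₁ 1, t ∈ Ioo (-1) 1 := fun t ht =>
    ⟨by linarith [(hsub ht).1.1], ht.2⟩
  have hlow : ∀ t ∈ Ioo t₁ 1, l / 4 / (1 - t) ≤ v' t := fun t ht => by
    obtain ⟨⟨ht0, ht1⟩, hlt⟩ := hsub ht
    rw [div_le_iff₀ (by linarith)]
    nlinarith
  obtain ⟨t, ht, hMt⟩ := exists_lt_of_div_one_sub_le_deriv (by positivity)
    (fun t ht => hv t (hI t ht)) hlow ht₁ M
  linarith [(abs_le.mp (hbd t (hI t ht))).2]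

-- `G` of the proof sketch, written in terms of `v` and `v'`
def lyapunov (v v' : ℝ → ℝ) (t : ℝ) : ℝ :=
  t * (1 - t ^ 2) * (6 * (1 - exp (v t))) - (1 - 3 * t ^ 2) * ((1 - t ^ 2) * v' t)
    - t * ((1 - t ^ 2) * v' t) ^ 2 / 2

-- the coefficient `6` is what makes the terms linear in `(1 - t²) v'` cancel
lemma hasDerivAt_lyapunov {v v' : ℝ → ℝ} {t : ℝ} (hv : HasDerivAt v (v' t) t)
    (hz : HasDerivAt (fun s => (1 - s ^ 2) * v' s) (6 * (1 - exp (v t))) t) :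
    HasDerivAt (lyapunov v v') (-((1 - t ^ 2) * v' t) ^ 2 / 2) t := by
  have hA : HasDerivAt (fun t : ℝ => t * (1 - t ^ 2)) (1 - 3 * t ^ 2) t :=
    ((hasDerivAt_id t).mul ((hasDerivAt_pow 2 t).const_sub 1)).congr_deriv (by simp; ring)
  have hB : HasDerivAt (fun t : ℝ => 1 - 3 * t ^ 2) (-(6 * t)) t :=
    (((hasDerivAt_pow 2 t).const_mul 3).const_sub 1).congr_deriv (by simp; ring)
  have hzp : HasDerivAt (fun t => 6 * (1 - exp (v t))) (6 * -(exp (v t) * v' t)) t :=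
    (hv.exp.const_sub 1).const_mul 6
  refine (((hA.mul hzp).sub (hB.mul hz)).sub
    (((hasDerivAt_id t).mul (hz.pow 2)).div_const 2)).congr_deriv ?_
  simp only [id, Pi.pow_apply]
  ring

section Lyapunov

variable {v v' : ℝ → ℝ} {M : ℝ}

lemma tendsto_lyapunov_nhdsLT_one (hv : ∀ t ∈ Ioo (-1) 1, HasDerivAt v (v' t) t)
    (hz : ∀ t ∈ Ioo (-1) 1, HasDerivAt (fun s => (1 - s ^ 2) * v' s) (6 * (1 - exp (v t))) t)
    (hbd : ∀ t ∈ Ioo (-1) 1, |v t| ≤ M) :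
    Tendsto (lyapunov v v') (𝓝[<] 1) (𝓝 0) := by
  set z : ℝ → ℝ := fun s => (1 - s ^ 2) * v' s
  set K : ℝ := 6 * (1 + exp M)
  have hzp : ∀ t ∈ Ioo (-1) 1, |6 * (1 - exp (v t))| ≤ K := fun t ht => by
    have : exp (v t) ≤ exp M := exp_le_exp.mpr (abs_le.mp (hbd t ht)).2
    rw [abs_le]; constructor <;> nlinarith [exp_pos (v t)]
  have hI : Ioo (-1) 1 ∈ 𝓝[<] (1 : ℝ) := Ioo_mem_nhdsLT (by norm_num)
  -- `z` is Lipschitz, hence has a limit at `1`, which must vanish since `v` is bounded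
  obtain ⟨g, hg, hgz⟩ := ((convex_Ioo (-1 : ℝ) 1).lipschitzOnWith_of_nnnorm_hasDerivWithin_le
    (C := K.toNNReal) (fun t ht => (hz t ht).hasDerivWithinAt) fun t ht => by
      rw [← NNReal.coe_le_coe, coe_nnnorm, Real.norm_eq_abs, coe_toNNReal _ (by positivity)]
      exact hzp t ht).extend_real
  have hzlim : Tendsto z (𝓝[<] 1) (𝓝 (g 1)) :=
    ((hg.continuous.tendsto 1).mono_left nhdsWithin_le_nhds).congr'
      (eventually_of_mem hI fun t ht => (hgz ht).symm)
  rw [eq_zero_of_tendsto_one_sub_sq_mul_deriv hv hbd hzlim] at hzlim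
  have hpoly : ∀ p : ℝ → ℝ, Continuous p → Tendsto p (𝓝[<] 1) (𝓝 (p 1)) := fun p hp =>
    (hp.tendsto 1).mono_left nhdsWithin_le_nhds
  have hA : Tendsto (fun t => t * (1 - t ^ 2) * (6 * (1 - exp (v t)))) (𝓝[<] 1) (𝓝 0) := by
    have h0 : Tendsto (fun t : ℝ => t * (1 - t ^ 2)) (𝓝[<] 1) (𝓝 0) := by
      simpa using hpoly _ (by fun_prop : Continuous fun t : ℝ => t * (1 - t ^ 2))
    refine h0.zero_mul_isBoundedUnder_le (isBoundedUnder_of_eventually_le (a := K) ?_)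
    filter_upwards [hI] with t ht using hzp t ht
  have hB := (hpoly (fun t => 1 - 3 * t ^ 2) (by fun_prop)).mul hzlim
  have hC := ((hpoly id continuous_id).mul (hzlim.pow 2)).div_const 2
  unfold lyapunov
  simpa using (hA.sub hB).sub hC

lemma lyapunov_nonneg (hv : ∀ t ∈ Ioo (-1) 1, HasDerivAt v (v' t) t)
    (hz : ∀ t ∈ Ioo (-1) 1, HasDerivAt (fun s => (1 - s ^ 2) * v' s) (6 * (1 - exp (v t))) t)
    (hbd : ∀ t ∈ Ioo (-1) 1, |v t| ≤ M) {t : ℝ} (ht : t ∈ Ioo (-1) 1) :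
    0 ≤ lyapunov v v' t := by
  have hderiv := fun t ht => hasDerivAt_lyapunov (hv t ht) (hz t ht)
  have hanti : AntitoneOn (lyapunov v v') (Ioo (-1) 1) := by
    refine antitoneOn_of_deriv_nonpos (convex_Ioo _ _)
      (fun t ht => (hderiv t ht).continuousAt.continuousWithinAt) (fun t ht => ?_) (fun t ht => ?_)
      <;> rw [interior_Ioo] at ht
    · exact (hderiv t ht).differentiableAt.differentiableWithinAt
    · rw [(hderiv t ht).deriv]
      nlinarith
  refine le_of_tendsto (tendsto_lyapunov_nhdsLT_one hv hz hbd) ?_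
  filter_upwards [Ioo_mem_nhdsLT ht.2] with s hs
  exact hanti ht ⟨ht.1.trans hs.1, hs.2⟩ hs.1.le

theorem eqOn_zero_of_meanField_ode (hv : ∀ t ∈ Ioo (-1) 1, HasDerivAt v (v' t) t)
    (hz : ∀ t ∈ Ioo (-1) 1, HasDerivAt (fun s => (1 - s ^ 2) * v' s) (6 * (1 - exp (v t))) t)
    (hbd : ∀ t ∈ Ioo (-1) 1, |v t| ≤ M) : EqOn v 0 (Ioo (-1) 1) := by
  have hneg : ∀ t ∈ Ioo (-1 : ℝ) 1, -t ∈ Ioo (-1 : ℝ) 1 := fun t ht =>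
    ⟨by linarith [ht.2], by linarith [ht.1]⟩
  -- the reflected profile `t ↦ v (-t)` solves the same equation, with `lyapunov` changing sign
  have hvr : ∀ t ∈ Ioo (-1) 1, HasDerivAt (fun s => v (-s)) (-v' (-t)) t := fun t ht => by
    simpa [Function.comp_def] using (hv (-t) (hneg t ht)).comp t (hasDerivAt_neg t)
  have hzr : ∀ t ∈ Ioo (-1) 1, HasDerivAt (fun s => (1 - s ^ 2) * -v' (-s))
      (6 * (1 - exp (v (-t)))) t := fun t ht => by
    simpa [Function.comp_def, Pi.neg_def] using
      ((hz (-t) (hneg t ht)).comp t (hasDerivAt_neg t)).neg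
  have hzero : ∀ t ∈ Ioo (-1) 1, lyapunov v v' t = 0 := fun t ht => by
    have h := lyapunov_nonneg hvr hzr (fun s hs => hbd (-s) (hneg s hs)) (hneg t ht)
    simp only [lyapunov, neg_neg, neg_sq] at h
    exact le_antisymm (by unfold lyapunov; linarith) (lyapunov_nonneg hv hz hbd ht)
  intro t ht
  have hnhds : Ioo (-1) 1 ∈ 𝓝 t := Ioo_mem_nhds ht.1 ht.2
  -- `lyapunov ≡ 0` forces `(1 - t²) v' ≡ 0`, so its derivative `6 (1 - eᵛ)` vanishes too
  have hz0 : ∀ s ∈ Ioo (-1) 1, (1 - s ^ 2) * v' s = 0 := fun s hs => by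
    have h := (hasDerivAt_lyapunov (hv s hs) (hz s hs)).unique
      ((hasDerivAt_const s 0).congr_of_eventuallyEq
        (eventually_of_mem (Ioo_mem_nhds hs.1 hs.2) hzero))
    nlinarith
  have h6 := (hz t ht).unique ((hasDerivAt_const t 0).congr_of_eventuallyEq
    (eventually_of_mem hnhds hz0))
  rw [Pi.zero_apply, ← exp_eq_one_iff]
  linarith

end Lyapunov

lemma iteratedFDeriv_two_line {E F : Type*} [NormedAddCommGroup E] [NormedSpace ℝ E]
    [NormedAddCommGroup F] [NormedSpace ℝ F] {w : E → F} (hw : ContDiff ℝ 2 w) (p d : E) (r : ℝ) :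
    iteratedFDeriv ℝ 2 w (p + r • d) ![d, d] = deriv (deriv fun s => w (p + s • d)) r := by
  have hline : ∀ s : ℝ, HasDerivAt (fun s : ℝ => p + s • d) d s := fun s => by
    simpa using ((hasDerivAt_id s).smul_const d).const_add p
  have hw1 : Differentiable ℝ w := hw.differentiable (by norm_num)
  have hw2 : Differentiable ℝ (fderiv ℝ w) := (hw.fderiv_right le_rfl).differentiable one_ne_zero
  have hderiv : deriv (fun s => w (p + s • d)) = fun s => fderiv ℝ w (p + s • d) d :=
    funext fun s => ((hw1 _).hasFDerivAt.comp_hasDerivAt s (hline s)).deriv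
  rw [iteratedFDeriv_two_apply, hderiv]
  exact ((ContinuousLinearMap.apply ℝ F d).hasFDerivAt.comp_hasDerivAt r
    ((hw2 _).hasFDerivAt.comp_hasDerivAt r (hline r))).deriv.symm

lemma lap_eq_deriv_deriv_add {w : ℝ × ℝ → ℝ} (hw : ContDiff ℝ 2 w) (y : ℝ × ℝ) :
    lap w y = deriv (deriv fun x => w (x, y.2)) y.1 + deriv (deriv fun x => w (y.1, x)) y.2 := by
  have h1 := iteratedFDeriv_two_line hw (0, y.2) (1, 0) y.1
  have h2 := iteratedFDeriv_two_line hw (y.1, 0) (0, 1) y.2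
  simp only [Prod.smul_mk, smul_eq_mul, mul_one, mul_zero, Prod.mk_add_mk, zero_add,
    add_zero] at h1 h2
  rw [lap, h1, h2]

lemma deriv_deriv_comp {v v' g g' : ℝ → ℝ} {v'' g'' x₀ : ℝ} {U : Set ℝ} (hU : U ∈ 𝓝 (g x₀))
    (hv : ∀ t ∈ U, HasDerivAt v (v' t) t) (hv' : HasDerivAt v' v'' (g x₀))
    (hg : ∀ x, HasDerivAt g (g' x) x) (hg' : HasDerivAt g' g'' x₀) :
    deriv (deriv fun x => v (g x)) x₀ = v'' * g' x₀ ^ 2 + v' (g x₀) * g'' := by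
  have hev : deriv (fun x => v (g x)) =ᶠ[𝓝 x₀] fun x => v' (g x) * g' x := by
    filter_upwards [(hg x₀).continuousAt.preimage_mem_nhds hU] with x hx
    exact ((hv _ hx).comp x (hg x)).deriv
  rw [hev.deriv_eq]
  exact ((hv'.comp x₀ (hg x₀)).mul hg').deriv.trans (by simp only [Function.comp_apply]; ring)

-- `chartHeight a b c y₁ y₂ = ⟨Π⁻¹ y, (a, b, c)⟩` (see `stereoN_dotProduct`); the next two
-- definitions are its first and second derivatives in `y₁`
def chartHeight (a b c x k : ℝ) : ℝ := c + 2 * (a * x + b * k - c) / (1 + x ^ 2 + k ^ 2)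

def chartHeightDeriv (a b c x k : ℝ) : ℝ :=
  2 * (a * (1 + x ^ 2 + k ^ 2) - 2 * x * (a * x + b * k - c)) / (1 + x ^ 2 + k ^ 2) ^ 2

def chartHeightDeriv2 (a b c x k : ℝ) : ℝ :=
  -4 * ((a * x + b * k - c) * (1 + x ^ 2 + k ^ 2)
    + 2 * x * (a * (1 + x ^ 2 + k ^ 2) - 2 * x * (a * x + b * k - c))) / (1 + x ^ 2 + k ^ 2) ^ 3

section ChartHeight

variable (a b c x k : ℝ)

lemma chartHeight_comm : chartHeight a b c x k = chartHeight b a c k x := by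
  unfold chartHeight; ring

lemma hasDerivAt_chartHeight :
    HasDerivAt (fun x => chartHeight a b c x k) (chartHeightDeriv a b c x k) x := by
  have hQ : 1 + x ^ 2 + k ^ 2 ≠ 0 := by positivity
  have hn := ((((hasDerivAt_id x).const_mul a).add_const (b * k)).sub_const c).const_mul 2
  have hq := ((hasDerivAt_pow 2 x).const_add 1).add_const (k ^ 2)
  refine ((hn.div hq hQ).const_add c).congr_deriv ?_
  unfold chartHeightDeriv
  simp only [id]
  field_simp
  ring

lemma hasDerivAt_chartHeightDeriv :
    HasDerivAt (fun x => chartHeightDeriv a b c x k) (chartHeightDeriv2 a b c x k) x := by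
  have hQ : 1 + x ^ 2 + k ^ 2 ≠ 0 := by positivity
  have hq := ((hasDerivAt_pow 2 x).const_add 1).add_const (k ^ 2)
  have hm := ((hq.const_mul a).sub (((hasDerivAt_id x).const_mul 2).mul
    ((((hasDerivAt_id x).const_mul a).add_const (b * k)).sub_const c))).const_mul 2
  refine (hm.div (hq.pow 2) (pow_ne_zero 2 hQ)).congr_deriv ?_
  unfold chartHeightDeriv2
  simp only [id, Pi.pow_apply, Pi.sub_apply, Pi.mul_apply]
  field_simp
  ring

-- In the chart, `|∇ℓ|² = 1 - ℓ²` and `Δℓ = -2ℓ` for the height `ℓ = ⟨x, e⟩` on `S²` pick up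
-- the conformal factor `4 / (1 + |y|²)²`.
lemma chartHeightDeriv_sq_add_sq :
    chartHeightDeriv a b c x k ^ 2 + chartHeightDeriv b a c k x ^ 2
      = 4 * (a ^ 2 + b ^ 2 + c ^ 2 - chartHeight a b c x k ^ 2) / (1 + x ^ 2 + k ^ 2) ^ 2 := by
  have hQ : 1 + x ^ 2 + k ^ 2 ≠ 0 := by positivity
  unfold chartHeightDeriv chartHeight
  field_simp
  ring

lemma chartHeightDeriv2_add :
    chartHeightDeriv2 a b c x k + chartHeightDeriv2 b a c k x
      = -8 * chartHeight a b c x k / (1 + x ^ 2 + k ^ 2) ^ 2 := by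
  have hQ : 1 + x ^ 2 + k ^ 2 ≠ 0 := by positivity
  unfold chartHeightDeriv2 chartHeight
  field_simp
  ring

end ChartHeight

lemma ode_of_lap_eq {w : ℝ × ℝ → ℝ} {v v' : ℝ → ℝ} {a b c lam t v'' : ℝ} {y : ℝ × ℝ}
    {U : Set ℝ} (habc : a ^ 2 + b ^ 2 + c ^ 2 = 1) (hw : ContDiff ℝ 2 w)
    (hwv : ∀ y, w y = v (chartHeight a b c y.1 y.2))
    (hlap : lap w y = 4 * lam * (1 - exp (w y)) / (1 + y.1 ^ 2 + y.2 ^ 2) ^ 2)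
    (ht : chartHeight a b c y.1 y.2 = t) (hU : U ∈ 𝓝 t) (hv : ∀ s ∈ U, HasDerivAt v (v' s) s)
    (hv' : HasDerivAt v' v'' t) :
    (1 - t ^ 2) * v'' - 2 * t * v' t = lam * (1 - exp (v t)) := by
  have ht' : chartHeight b a c y.2 y.1 = t := by rw [← chartHeight_comm, ht]
  have h1 : deriv (deriv fun x => w (x, y.2)) y.1
      = v'' * chartHeightDeriv a b c y.1 y.2 ^ 2 + v' t * chartHeightDeriv2 a b c y.1 y.2 := by
    simp only [hwv]
    rw [← ht] at hU hv' ⊢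
    exact deriv_deriv_comp (g := fun x => chartHeight a b c x y.2) hU hv hv'
      (hasDerivAt_chartHeight a b c · y.2)
      (hasDerivAt_chartHeightDeriv a b c y.1 y.2)
  have h2 : deriv (deriv fun x => w (y.1, x)) y.2
      = v'' * chartHeightDeriv b a c y.2 y.1 ^ 2 + v' t * chartHeightDeriv2 b a c y.2 y.1 := by
    simp only [hwv, chartHeight_comm a b c y.1]
    rw [← ht'] at hU hv' ⊢
    exact deriv_deriv_comp (g := fun x => chartHeight b a c x y.1) hU hv hv'
      (hasDerivAt_chartHeight b a c · y.1)
      (hasDerivAt_chartHeightDeriv b a c y.2 y.1)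
  have hgrad := chartHeightDeriv_sq_add_sq a b c y.1 y.2
  have hlapL := chartHeightDeriv2_add a b c y.1 y.2
  rw [habc, ht] at hgrad
  rw [ht] at hlapL
  rw [lap_eq_deriv_deriv_add hw, h1, h2, hwv, ht] at hlap
  have hQ : (1 + y.1 ^ 2 + y.2 ^ 2) ^ 2 ≠ 0 := by positivity
  have hsum : v'' * (4 * (1 - t ^ 2)) + v' t * (-8 * t) = 4 * lam * (1 - exp (v t)) := by
    rw [← div_left_inj' hQ, ← hlap]
    linear_combination -(v'' * hgrad + v' t * hlapL)
  linear_combination hsum / 4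

lemma mem_sphere3 {x : Fin 3 → ℝ} : x ∈ sphere3 ↔ x 0 ^ 2 + x 1 ^ 2 + x 2 ^ 2 = 1 := Iff.rfl

lemma mem_sphere3_iff_dotProduct {x : Fin 3 → ℝ} : x ∈ sphere3 ↔ x ⬝ᵥ x = 1 := by
  simp [mem_sphere3, vec3_dotProduct, sq]

lemma dotProduct_mem_Icc {x e : Fin 3 → ℝ} (hx : x ∈ sphere3) (he : e ∈ sphere3) :
    x ⬝ᵥ e ∈ Icc (-1) 1 := by
  rw [mem_sphere3] at hx he
  rw [vec3_dotProduct, mem_Icc, ← abs_le, ← sq_le_one_iff_abs_le_one]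
  nlinarith [sq_nonneg (x 0 * e 1 - x 1 * e 0), sq_nonneg (x 0 * e 2 - x 2 * e 0),
    sq_nonneg (x 1 * e 2 - x 2 * e 1)]

lemma exists_mem_sphere3_dotProduct_eq_zero (e : Fin 3 → ℝ) :
    ∃ e' ∈ sphere3, e ⬝ᵥ e' = 0 := by
  by_cases h : e 0 ^ 2 + e 1 ^ 2 = 0
  · have h0 : e 0 = 0 := by nlinarith [sq_nonneg (e 0), sq_nonneg (e 1)]
    refine ⟨![1, 0, 0], by simp [mem_sphere3], ?_⟩
    rw [vec3_dotProduct]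
    simp [h0]
  · set r := √(e 0 ^ 2 + e 1 ^ 2)
    have hr : r ^ 2 = e 0 ^ 2 + e 1 ^ 2 := sq_sqrt (by positivity)
    have hr0 : r ≠ 0 := fun h0 => h (by rw [← hr, h0]; ring)
    refine ⟨![-e 1 / r, e 0 / r, 0], ?_, ?_⟩
    · simp only [mem_sphere3, cons_val_zero, cons_val_one, cons_val_two, head_cons, tail_cons]
      field_simp
      linarith
    · simp only [vec3_dotProduct, cons_val_zero, cons_val_one, cons_val_two, head_cons, tail_cons]
      field_simp
      ring

def stereoProjN (x : Fin 3 → ℝ) : ℝ × ℝ := (x 0 / (1 - x 2), x 1 / (1 - x 2))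

lemma stereoN_mem_sphere3 (y : ℝ × ℝ) : stereoN y ∈ sphere3 := by
  have hQ : 1 + y.1 ^ 2 + y.2 ^ 2 ≠ 0 := by positivity
  simp only [mem_sphere3, stereoN, cons_val_zero, cons_val_one, cons_val_two, head_cons, tail_cons]
  field_simp
  ring

lemma stereoN_stereoProjN {x : Fin 3 → ℝ} (hx : x ∈ sphere3) (hN : x 2 ≠ 1) :
    stereoN (stereoProjN x) = x := by
  rw [mem_sphere3] at hx
  have h1 : 1 - x 2 ≠ 0 := sub_ne_zero.mpr hN.symm
  have hQ : 1 + (x 0 / (1 - x 2)) ^ 2 + (x 1 / (1 - x 2)) ^ 2 = 2 / (1 - x 2) := by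
    field_simp
    linear_combination hx
  ext i
  fin_cases i <;> simp only [stereoN, stereoProjN, hQ] <;> simp <;> field_simp
  linear_combination hx

lemma stereoN_dotProduct (y : ℝ × ℝ) (e : Fin 3 → ℝ) :
    stereoN y ⬝ᵥ e = chartHeight (e 0) (e 1) (e 2) y.1 y.2 := by
  have hQ : 1 + y.1 ^ 2 + y.2 ^ 2 ≠ 0 := by positivity
  simp only [vec3_dotProduct, stereoN, chartHeight, cons_val_zero, cons_val_one, cons_val_two,
    head_cons, tail_cons]
  field_simp
  ring

def greatCircle (e e' : Fin 3 → ℝ) (t : ℝ) : Fin 3 → ℝ := t • e + √(1 - t ^ 2) • e'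

section GreatCircle

variable {e e' : Fin 3 → ℝ} {t : ℝ}

lemma greatCircle_dotProduct (he : e ∈ sphere3) (horth : e ⬝ᵥ e' = 0) (t : ℝ) :
    greatCircle e e' t ⬝ᵥ e = t := by
  rw [mem_sphere3_iff_dotProduct] at he
  simp [greatCircle, add_dotProduct, he, dotProduct_comm e', horth]

lemma greatCircle_mem_sphere3 (he : e ∈ sphere3) (he' : e' ∈ sphere3) (horth : e ⬝ᵥ e' = 0)
    (ht : t ∈ Icc (-1) 1) : greatCircle e e' t ∈ sphere3 := by
  rw [mem_sphere3_iff_dotProduct] at *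
  have hs : √(1 - t ^ 2) ^ 2 = 1 - t ^ 2 := sq_sqrt (by nlinarith [ht.1, ht.2])
  simp only [greatCircle, add_dotProduct, dotProduct_add, smul_dotProduct, dotProduct_smul,
    he, he', horth, dotProduct_comm e' e, smul_eq_mul]
  linear_combination hs

lemma continuous_greatCircle : Continuous (greatCircle e e') := by
  unfold greatCircle
  fun_prop

lemma contDiffAt_greatCircle (ht : t ∈ Ioo (-1) 1) : ContDiffAt ℝ 2 (greatCircle e e') t := by
  have hsqrt : ContDiffAt ℝ 2 (fun s : ℝ => √(1 - s ^ 2)) t :=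
    (contDiff_const.sub (contDiff_id.pow 2)).contDiffAt.sqrt
      (by simp only [id]; nlinarith [ht.1, ht.2])
  exact (contDiffAt_id.smul contDiffAt_const).add (hsqrt.smul contDiffAt_const)

lemma exists_greatCircle_ne_one (he : e ∈ sphere3) (ht : t ∈ Ioo (-1) 1) :
    ∃ e' ∈ sphere3, e ⬝ᵥ e' = 0 ∧ greatCircle e e' t 2 ≠ 1 := by
  obtain ⟨e', he', horth⟩ := exists_mem_sphere3_dotProduct_eq_zero e
  by_cases hN : greatCircle e e' t 2 = 1
  · -- the circles through `±e'` cannot both pass through the north pole at height `t`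
    refine ⟨-e', by simpa [mem_sphere3] using he', by simp [horth], fun hN' => ?_⟩
    simp only [greatCircle, Pi.add_apply, Pi.smul_apply, Pi.neg_apply, smul_eq_mul] at hN hN'
    have h1 : t * e 2 = 1 := by linarith
    have he2 : e 2 ^ 2 ≤ 1 := by nlinarith [mem_sphere3.mp he, sq_nonneg (e 0), sq_nonneg (e 1)]
    nlinarith [ht.1, ht.2, sq_nonneg t]
  · exact ⟨e', he', horth, hN⟩

end GreatCircle

lemma exists_stereoN_dotProduct_eq {e : Fin 3 → ℝ} {t : ℝ} (he : e ∈ sphere3)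
    (ht : t ∈ Ioo (-1) 1) : ∃ y, stereoN y ⬝ᵥ e = t := by
  obtain ⟨e', he', horth, hN⟩ := exists_greatCircle_ne_one he ht
  refine ⟨stereoProjN (greatCircle e e' t), ?_⟩
  rw [stereoN_stereoProjN (greatCircle_mem_sphere3 he he' horth (Ioo_subset_Icc_self ht)) hN,
    greatCircle_dotProduct he horth]

def HasAxialProfile (u : (Fin 3 → ℝ) → ℝ) (e : Fin 3 → ℝ) (v : ℝ → ℝ) : Prop :=
  ∀ x ∈ sphere3, u x = v (x ⬝ᵥ e)

namespace HasAxialProfile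

variable {u : (Fin 3 → ℝ) → ℝ} {e : Fin 3 → ℝ} {v : ℝ → ℝ} {t : ℝ}

lemma of_greatCircle {e' : Fin 3 → ℝ} (he : e ∈ sphere3) (he' : e' ∈ sphere3)
    (horth : e ⬝ᵥ e' = 0)
    (hsym : ∀ x ∈ sphere3, ∀ x' ∈ sphere3,
      x 0 * e 0 + x 1 * e 1 + x 2 * e 2 = x' 0 * e 0 + x' 1 * e 1 + x' 2 * e 2 → u x = u x') :
    HasAxialProfile u e fun t => u (greatCircle e e' t) := fun x hx =>
  hsym x hx _ (greatCircle_mem_sphere3 he he' horth (dotProduct_mem_Icc hx he)) <| by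
    rw [← vec3_dotProduct, ← vec3_dotProduct, greatCircle_dotProduct he horth]

lemma contDiffAt (hprof : HasAxialProfile u e v) (hw : ContDiff ℝ 2 fun y => u (stereoN y))
    (he : e ∈ sphere3) (ht : t ∈ Ioo (-1) 1) : ContDiffAt ℝ 2 v t := by
  obtain ⟨e', he', horth, hN⟩ := exists_greatCircle_ne_one he ht
  have hγ := contDiffAt_pi.mp (contDiffAt_greatCircle (e := e) (e' := e') ht)
  have hproj : ContDiffAt ℝ 2 (fun s => stereoProjN (greatCircle e e' s)) t :=
    ((hγ 0).div (contDiffAt_const.sub (hγ 2)) (sub_ne_zero.mpr hN.symm)).prodMk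
      ((hγ 1).div (contDiffAt_const.sub (hγ 2)) (sub_ne_zero.mpr hN.symm))
  refine (hw.contDiffAt.comp t hproj).congr_of_eventuallyEq ?_
  filter_upwards [Ioo_mem_nhds ht.1 ht.2, (hγ 2).continuousAt.eventually_ne hN] with s hs hsN
  have hmem := greatCircle_mem_sphere3 he he' horth (Ioo_subset_Icc_self hs)
  rw [Function.comp_apply, stereoN_stereoProjN hmem hsN, hprof _ hmem,
    greatCircle_dotProduct he horth]

lemma hasDerivAt (hprof : HasAxialProfile u e v) (hw : ContDiff ℝ 2 fun y => u (stereoN y))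
    (he : e ∈ sphere3) (ht : t ∈ Ioo (-1) 1) : HasDerivAt v (deriv v t) t :=
  ((hprof.contDiffAt hw he ht).differentiableAt two_ne_zero).hasDerivAt

lemma hasDerivAt_one_sub_sq_mul_deriv {lam : ℝ} (hprof : HasAxialProfile u e v)
    (hu : IsMFSolution lam u) (he : e ∈ sphere3) (ht : t ∈ Ioo (-1) 1) :
    HasDerivAt (fun s => (1 - s ^ 2) * deriv v s) (lam * (1 - exp (v t))) t := by
  have hC : ContDiffOn ℝ 2 v (Ioo (-1) 1) := fun s hs =>
    (hprof.contDiffAt hu.2.1 he hs).contDiffWithinAt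
  have hv' : HasDerivAt (deriv v) (deriv (deriv v) t) t :=
    (((hC.deriv_of_isOpen isOpen_Ioo (m := 1) le_rfl).differentiableOn one_ne_zero t ht
      ).differentiableAt (Ioo_mem_nhds ht.1 ht.2)).hasDerivAt
  obtain ⟨y, hy⟩ := exists_stereoN_dotProduct_eq he ht
  have hode := ode_of_lap_eq (v' := deriv v) (mem_sphere3.mp he) hu.2.1
    (fun y => by rw [hprof _ (stereoN_mem_sphere3 y), stereoN_dotProduct]) (hu.2.2.2.1 y)
    (by rw [← stereoN_dotProduct, hy]) (Ioo_mem_nhds ht.1 ht.2)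
    (fun s hs => hprof.hasDerivAt hu.2.1 he hs) hv'
  refine (((hasDerivAt_pow 2 t).const_sub 1).mul hv').congr_deriv ?_
  linear_combination hode

end HasAxialProfile

/-- An axially symmetric solution of `Δu = 6(1 - e^u)` on `S²`
vanishes identically. -/
theorem axisym_solution_lambda_six_is_zero (u : (Fin 3 → ℝ) → ℝ)
    (hu : IsMFSolution 6 u) (hsym : AxiallySymmetric u) :
    ∀ x ∈ sphere3, u x = 0 := by
  obtain ⟨e, he, hsym⟩ := hsym
  obtain ⟨e', he', horth⟩ := exists_mem_sphere3_dotProduct_eq_zero e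
  set v : ℝ → ℝ := fun t => u (greatCircle e e' t)
  have hprof : HasAxialProfile u e v := .of_greatCircle he he' horth hsym
  have hcont : ContinuousOn v (Icc (-1) 1) :=
    hu.1.comp continuous_greatCircle.continuousOn fun _ ht =>
      greatCircle_mem_sphere3 he he' horth ht
  obtain ⟨M, hM⟩ := isCompact_Icc.exists_bound_of_continuousOn hcont
  have hzero : EqOn v 0 (Ioo (-1) 1) :=
    eqOn_zero_of_meanField_ode (fun t ht => hprof.hasDerivAt hu.2.1 he ht)
      (fun t ht => hprof.hasDerivAt_one_sub_sq_mul_deriv hu he ht)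
      (fun t ht => hM t (Ioo_subset_Icc_self ht))
  have hzero' : EqOn v 0 (Icc (-1) 1) := hzero.of_subset_closure hcont continuousOn_const
    Ioo_subset_Icc_self (by rw [closure_Ioo (by norm_num)])
  intro x hx
  rw [hprof x hx]
  exact hzero' (dotProduct_mem_Icc hx he)
end
end

section
/- Let g : [−1,1] → ℝ be twice continuously differentiable and satisfy ((1−t²) g'(t))' = 6(1−e^{g(t)}) for all t ∈ [−1,1]. Then g ≡ 0. -/
/-!
Put `F = (1 - t²) g'`, so that `F' = 6 (1 - e^g)`. The Pohozaev-type quantity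
`M = t F² / 2 + (1 - 3t²) F + 6 t (1 - t²) (e^g - 1)` satisfies `M' = F² / 2 ≥ 0` and vanishes
at `t = ±1`; the weight `1 - 3t²` is, up to a factor, the Legendre polynomial `P₂`, the
eigenfunction of `((1 - t²) ·')'` with eigenvalue `-6`. Hence `M ≡ 0`, so `F ≡ 0`, so
`F' = 6 (1 - e^g) ≡ 0`, i.e. `g ≡ 0`.
-/

open Real MeasureTheory

noncomputable section

open Set Filter Topology

theorem hasDerivAt_eq_zero_of_nonneg_of_eq_endpoints {f f' : ℝ → ℝ} {a b : ℝ}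
    (hf : ContinuousOn f (Icc a b)) (hderiv : ∀ x ∈ Ioo a b, HasDerivAt f (f' x) x)
    (hnonneg : ∀ x ∈ Ioo a b, 0 ≤ f' x) (hfab : f a = f b) :
    ∀ x ∈ Ioo a b, f' x = 0 := by
  intro x hx
  have hmono : MonotoneOn f (Icc a b) :=
    monotoneOn_of_hasDerivWithinAt_nonneg (convex_Icc a b) hf
      (by simpa only [interior_Icc] using fun y hy => (hderiv y hy).hasDerivWithinAt)
      (by simpa only [interior_Icc] using hnonneg)
  have hle : a ≤ b := (hx.1.trans hx.2).le
  have hconst : EqOn f (fun _ => f a) (Icc a b) := fun y hy =>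
    le_antisymm (hfab ▸ hmono hy (right_mem_Icc.2 hle) hy.2) (hmono (left_mem_Icc.2 hle) hy hy.1)
  have hzero : HasDerivAt f 0 x :=
    (hasDerivAt_const x (f a)).congr_of_eventuallyEq
      (hconst.eventuallyEq_of_mem (Icc_mem_nhds hx.1 hx.2))
  exact (hderiv x hx).unique hzero

def pohozaev (g F : ℝ → ℝ) (t : ℝ) : ℝ :=
  t * F t ^ 2 / 2 + (1 - 3 * t ^ 2) * F t + 6 * t * (1 - t ^ 2) * (exp (g t) - 1)

theorem hasDerivAt_pohozaev {g F : ℝ → ℝ} {x d : ℝ} (hg : HasDerivAt g d x)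
    (hF : HasDerivAt F (6 * (1 - exp (g x))) x) (hFx : F x = (1 - x ^ 2) * d) :
    HasDerivAt (pohozaev g F) (F x ^ 2 / 2) x := by
  have ht : HasDerivAt (fun t : ℝ => t) 1 x := hasDerivAt_id x
  have ht2 : HasDerivAt (fun t : ℝ => t ^ 2) (2 * x) x := by
    simpa using hasDerivAt_pow 2 x
  have h := (((ht.mul (hF.pow 2)).div_const 2).add
    (((ht2.const_mul 3).const_sub 1).mul hF)).add
    (((ht.const_mul 6).mul (ht2.const_sub 1)).mul (hg.exp.sub_const 1))
  refine h.congr_deriv ?_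
  simp only [Pi.pow_apply, Pi.mul_apply, Nat.cast_ofNat]
  rw [hFx]
  ring

theorem ContinuousOn.pohozaev {g F : ℝ → ℝ} {s : Set ℝ} (hg : ContinuousOn g s)
    (hF : ContinuousOn F s) : ContinuousOn (pohozaev g F) s := by
  unfold _root_.pohozaev
  fun_prop

theorem pohozaev_eq_zero_of_sq_eq_one (g d : ℝ → ℝ) {t : ℝ} (ht : t ^ 2 = 1) :
    pohozaev g (fun s => (1 - s ^ 2) * d s) t = 0 := by
  simp [_root_.pohozaev, ht]

/-- The axially symmetric mean field equation at `λ = 6`: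
if `((1 - t²) g')' = 6(1 - e^g)` on `[-1, 1]`, then `g ≡ 0`. -/
theorem axisym_ode_lambda_six_is_zero (g : ℝ → ℝ)
    (hg : ContDiffOn ℝ 2 g (Set.Icc (-1 : ℝ) 1))
    (hode : ∀ t ∈ Set.Icc (-1 : ℝ) 1,
      derivWithin (fun s => (1 - s ^ 2) * derivWithin g (Set.Icc (-1 : ℝ) 1) s)
          (Set.Icc (-1 : ℝ) 1) t = 6 * (1 - Real.exp (g t))) :
    ∀ t ∈ Set.Icc (-1 : ℝ) 1, g t = 0 := by
  set I := Icc (-1 : ℝ) 1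
  set F := fun s => (1 - s ^ 2) * derivWithin g I s
  have hg' : ContDiffOn ℝ 1 (derivWithin g I) I :=
    hg.derivWithin (uniqueDiffOn_Icc (by norm_num)) (by norm_num)
  have hFdiff : DifferentiableOn ℝ F I :=
    ((differentiableOn_const 1).sub (differentiableOn_pow 2)).mul
      (hg'.differentiableOn one_ne_zero)
  have hM : ∀ x ∈ Ioo (-1 : ℝ) 1, HasDerivAt (pohozaev g F) (F x ^ 2 / 2) x := by
    intro x hx
    have hnhds : I ∈ 𝓝 x := Icc_mem_nhds hx.1 hx.2
    have hFx := (hFdiff x (Ioo_subset_Icc_self hx)).hasDerivWithinAt.hasDerivAt hnhds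
    rw [hode x (Ioo_subset_Icc_self hx)] at hFx
    exact hasDerivAt_pohozaev ((hg.differentiableOn (by norm_num) x
      (Ioo_subset_Icc_self hx)).hasDerivWithinAt.hasDerivAt hnhds) hFx rfl
  have hF : EqOn F (fun _ => 0) I := by
    intro x hx
    rcases eq_endpoints_or_mem_Ioo_of_mem_Icc hx with rfl | rfl | hx
    · simp [F]
    · simp [F]
    · have hMx := hasDerivAt_eq_zero_of_nonneg_of_eq_endpoints
        (hg.continuousOn.pohozaev hFdiff.continuousOn) hM (fun _ _ => by positivity)
        (by rw [pohozaev_eq_zero_of_sq_eq_one _ _ (by norm_num),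
          pohozaev_eq_zero_of_sq_eq_one _ _ (by norm_num)]) x hx
      simpa using hMx
  intro t ht
  have h := hode t ht
  rw [derivWithin_congr hF (hF ht), derivWithin_fun_const, Pi.zero_apply] at h
  exact exp_eq_one_iff _ |>.1 (by linarith)
end
end

section
/- Let λ ∈ ℝ and let ū : ℝ² → ℝ be three times continuously differentiable and satisfy Δū(y) = 4λ(1−e^{ū(y)})/(1+|y|²)² for all y ∈ ℝ² (the stereographic chart form of the mean field equation Δu = λ(1−e^u) on S²). Define φ(y) = y₁ ∂₂ū(y) − y₂ ∂₁ū(y) (the derivative of ū along the rotation vector field of ℝ², corresponding to the Killing field X₃ = x₁∂₂ − x₂∂₁ on S²). Then Δφ(y) + 4λ e^{ū(y)} φ(y) / (1+|y|²)² = 0 for all y ∈ ℝ². -/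
open Real MeasureTheory

noncomputable section

/-!
The rotation field `X = y₁∂₂ - y₂∂₁` commutes with the Laplacian. For the derivative `X_A` along a
linear vector field `x ↦ A x`, symmetry of second derivatives gives
`∂ᵥ (X_A f) = X_A (∂ᵥ f) + ∂_{A v} f`, hence `∂ᵥ² (X_A f) = X_A (∂ᵥ² f) + 2 ∂ᵥ ∂_{A v} f`; for the
rotation the two correction terms are `2 ∂₁∂₂ f` and `-2 ∂₂∂₁ f`, which cancel. Applying `X` to the
equation, and using that `X` annihilates the radial factor `(1 + |y|²)⁻²`, turns
`Δū = 4λ(1 - e^ū)/(1 + |y|²)²` into `Δ(Xū) = -4λ e^ū Xū/(1 + |y|²)²`.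
-/

section DirectionalDerivatives

variable {E F : Type*} [NormedAddCommGroup E] [NormedSpace ℝ E]
  [NormedAddCommGroup F] [NormedSpace ℝ F]

def partialDeriv (v : E) (f : E → F) (x : E) : F := fderiv ℝ f x v

def fieldDeriv (A : E →L[ℝ] E) (f : E → F) (x : E) : F := fderiv ℝ f x (A x)

theorem ContDiff.partialDeriv {m n : WithTop ℕ∞} {f : E → F} (hf : ContDiff ℝ n f)
    (hmn : m + 1 ≤ n) (v : E) : ContDiff ℝ m (partialDeriv v f) :=
  (hf.fderiv_right hmn).clm_apply contDiff_const

theorem ContDiff.fieldDeriv {m n : WithTop ℕ∞} {f : E → F} (hf : ContDiff ℝ n f)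
    (hmn : m + 1 ≤ n) (A : E →L[ℝ] E) : ContDiff ℝ m (fieldDeriv A f) :=
  (hf.fderiv_right hmn).clm_apply A.contDiff

theorem partialDeriv_add {f g : E → F} (hf : Differentiable ℝ f) (hg : Differentiable ℝ g)
    (v : E) : partialDeriv v (f + g) = partialDeriv v f + partialDeriv v g := by
  funext x
  simp [partialDeriv, fderiv_add (hf x) (hg x)]

theorem fieldDeriv_add {f g : E → F} (hf : Differentiable ℝ f) (hg : Differentiable ℝ g)
    (A : E →L[ℝ] E) : fieldDeriv A (f + g) = fieldDeriv A f + fieldDeriv A g := by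
  funext x
  simp [fieldDeriv, fderiv_add (hf x) (hg x)]

theorem partialDeriv_neg_left (v : E) (f : E → F) :
    partialDeriv (-v) f = -partialDeriv v f := by
  funext x
  simp [partialDeriv]

theorem partialDeriv_neg (v : E) (f : E → F) :
    partialDeriv v (-f) = -partialDeriv v f := by
  funext x
  simp [partialDeriv, fderiv_neg]

theorem partialDeriv_partialDeriv_apply {f : E → F} {x : E}
    (hf : DifferentiableAt ℝ (fderiv ℝ f) x) (u v : E) :
    partialDeriv u (partialDeriv v f) x = fderiv ℝ (fderiv ℝ f) x u v := by
  change fderiv ℝ (fun y => fderiv ℝ f y v) x u = _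
  simp [fderiv_clm_apply hf (differentiableAt_const v)]

theorem partialDeriv_comm {f : E → F} (hf : ContDiff ℝ 2 f) (u v : E) :
    partialDeriv u (partialDeriv v f) = partialDeriv v (partialDeriv u f) := by
  funext x
  have hf' : DifferentiableAt ℝ (fderiv ℝ f) x :=
    (hf.fderiv_right (m := 1) le_rfl).differentiable one_ne_zero x
  rw [partialDeriv_partialDeriv_apply hf', partialDeriv_partialDeriv_apply hf',
    (hf.contDiffAt.isSymmSndFDerivAt (by simp)).eq]

theorem partialDeriv_fieldDeriv {f : E → F} (hf : ContDiff ℝ 2 f) (A : E →L[ℝ] E) (v : E) :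
    partialDeriv v (fieldDeriv A f) = fieldDeriv A (partialDeriv v f) + partialDeriv (A v) f := by
  funext x
  have hf' : DifferentiableAt ℝ (fderiv ℝ f) x :=
    (hf.fderiv_right (m := 1) le_rfl).differentiable one_ne_zero x
  have hsymm := (hf.contDiffAt.isSymmSndFDerivAt (x := x) (by simp)).eq
  change fderiv ℝ (fun y => fderiv ℝ f y (A y)) x v =
    fderiv ℝ (fun y => fderiv ℝ f y v) x (A x) + fderiv ℝ f x (A v)
  simp [fderiv_clm_apply hf' A.differentiableAt, fderiv_clm_apply hf' (differentiableAt_const v),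
    hsymm v (A x), add_comm]

theorem partialDeriv_partialDeriv_fieldDeriv {f : E → F} (hf : ContDiff ℝ 3 f)
    (A : E →L[ℝ] E) (v : E) :
    partialDeriv v (partialDeriv v (fieldDeriv A f)) =
      fieldDeriv A (partialDeriv v (partialDeriv v f)) +
        2 • partialDeriv v (partialDeriv (A v) f) := by
  have hf2 : ContDiff ℝ 2 f := hf.of_le (by norm_num)
  have hvf : ContDiff ℝ 2 (partialDeriv v f) := hf.partialDeriv (by norm_num) v
  rw [partialDeriv_fieldDeriv hf2,
    partialDeriv_add ((hvf.fieldDeriv (m := 1) le_rfl A).differentiable one_ne_zero)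
      ((hf2.partialDeriv (m := 1) le_rfl _).differentiable one_ne_zero),
    partialDeriv_fieldDeriv hvf, partialDeriv_comm hf2 (A v) v, two_smul, add_assoc]

theorem fieldDeriv_mul_apply {f g : E → ℝ} {x : E} (hf : DifferentiableAt ℝ f x)
    (hg : DifferentiableAt ℝ g x) (A : E →L[ℝ] E) :
    fieldDeriv A (fun z => f z * g z) x = fieldDeriv A f x * g x + f x * fieldDeriv A g x := by
  simp only [fieldDeriv, fderiv_fun_mul hf hg, add_apply, smul_apply, smul_eq_mul]
  ring

theorem fieldDeriv_comp_apply {h : ℝ → ℝ} {f : E → ℝ} {x : E}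
    (hh : DifferentiableAt ℝ h (f x)) (hf : DifferentiableAt ℝ f x) (A : E →L[ℝ] E) :
    fieldDeriv A (fun z => h (f z)) x = deriv h (f x) * fieldDeriv A f x := by
  unfold fieldDeriv
  change fderiv ℝ (h ∘ f) x (A x) = _
  simp [(hh.hasDerivAt.comp_hasFDerivAt x hf.hasFDerivAt).fderiv]

end DirectionalDerivatives

def rotField : ℝ × ℝ →L[ℝ] ℝ × ℝ :=
  (-ContinuousLinearMap.snd ℝ ℝ ℝ).prod (ContinuousLinearMap.fst ℝ ℝ ℝ)

@[simp]
theorem rotField_apply (z : ℝ × ℝ) : rotField z = (-z.2, z.1) := rfl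

theorem fieldDeriv_rotField_apply (f : ℝ × ℝ → ℝ) (z : ℝ × ℝ) :
    fieldDeriv rotField f z = z.1 * fderiv ℝ f z (0, 1) - z.2 * fderiv ℝ f z (1, 0) := by
  have hz : rotField z = z.1 • ((0 : ℝ), (1 : ℝ)) - z.2 • ((1 : ℝ), (0 : ℝ)) := by
    ext <;> simp
  rw [fieldDeriv, hz, map_sub, map_smul, map_smul, smul_eq_mul, smul_eq_mul]

theorem lap_eq_partialDeriv {f : ℝ × ℝ → ℝ} (hf : Differentiable ℝ (fderiv ℝ f)) :
    lap f = partialDeriv (1, 0) (partialDeriv (1, 0) f) +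
      partialDeriv (0, 1) (partialDeriv (0, 1) f) := by
  funext y
  simp [lap, iteratedFDeriv_two_apply, partialDeriv_partialDeriv_apply (hf y)]

theorem lap_fieldDeriv_rotField {f : ℝ × ℝ → ℝ} (hf : ContDiff ℝ 3 f) :
    lap (fieldDeriv rotField f) = fieldDeriv rotField (lap f) := by
  have hf2 : ContDiff ℝ 2 f := hf.of_le (by norm_num)
  have hXf : ContDiff ℝ 2 (fieldDeriv rotField f) := hf.fieldDeriv (by norm_num) _
  have hvvf : ∀ v, ContDiff ℝ 1 (partialDeriv v (partialDeriv v f)) := fun v =>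
    (hf.partialDeriv (m := 2) (by norm_num) v).partialDeriv le_rfl v
  rw [lap_eq_partialDeriv ((hXf.fderiv_right (m := 1) le_rfl).differentiable one_ne_zero),
    lap_eq_partialDeriv ((hf2.fderiv_right (m := 1) le_rfl).differentiable one_ne_zero),
    fieldDeriv_add ((hvvf _).differentiable one_ne_zero) ((hvvf _).differentiable one_ne_zero),
    partialDeriv_partialDeriv_fieldDeriv hf, partialDeriv_partialDeriv_fieldDeriv hf]
  have h₁ : rotField (1, 0) = (0, 1) := by simp
  have h₂ : rotField (0, 1) = -(1, 0) := by simp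
  rw [h₁, h₂, partialDeriv_neg_left, partialDeriv_neg, partialDeriv_comm hf2 (1, 0) (0, 1)]
  abel

theorem fieldDeriv_rotField_sq_add_sq (y : ℝ × ℝ) :
    fieldDeriv rotField (fun z => z.1 ^ 2 + z.2 ^ 2) y = 0 := by
  rw [fieldDeriv, fderiv_fun_add (by fun_prop) (by fun_prop),
    fderiv_fun_pow 2 differentiableAt_fst, fderiv_fun_pow 2 differentiableAt_snd]
  simp only [fderiv_fst, fderiv_snd, rotField_apply, add_apply, smul_apply,
    ContinuousLinearMap.coe_fst', ContinuousLinearMap.coe_snd', smul_eq_mul]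
  ring

theorem fieldDeriv_rotField_meanFieldRhs {w : ℝ × ℝ → ℝ} {y : ℝ × ℝ}
    (hw : DifferentiableAt ℝ w y) (lam : ℝ) :
    fieldDeriv rotField
        (fun z => 4 * lam * (1 - Real.exp (w z)) / (1 + z.1 ^ 2 + z.2 ^ 2) ^ 2) y =
      -(4 * lam * Real.exp (w y) * fieldDeriv rotField w y) / (1 + y.1 ^ 2 + y.2 ^ 2) ^ 2 := by
  set F : ℝ → ℝ := fun t => 4 * lam * (1 - Real.exp t)
  set ρ : ℝ → ℝ := fun r => ((1 + r) ^ 2)⁻¹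
  have hsplit :
      (fun z : ℝ × ℝ => 4 * lam * (1 - Real.exp (w z)) / (1 + z.1 ^ 2 + z.2 ^ 2) ^ 2) =
        fun z => F (w z) * ρ (z.1 ^ 2 + z.2 ^ 2) := by
    funext z
    simp only [F, ρ, div_eq_mul_inv, add_assoc]
  have hF : Differentiable ℝ F := by fun_prop
  have hρ : DifferentiableAt ℝ ρ (y.1 ^ 2 + y.2 ^ 2) :=
    DifferentiableAt.inv (by fun_prop) (by positivity)
  have hq : DifferentiableAt ℝ (fun z : ℝ × ℝ => z.1 ^ 2 + z.2 ^ 2) y := by fun_prop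
  have hFw : DifferentiableAt ℝ (fun z => F (w z)) y := (hF _).comp y hw
  have hρq : DifferentiableAt ℝ (fun z : ℝ × ℝ => ρ (z.1 ^ 2 + z.2 ^ 2)) y :=
    DifferentiableAt.comp (g := ρ) y hρ hq
  rw [hsplit, fieldDeriv_mul_apply hFw hρq, fieldDeriv_comp_apply (hF _) hw,
    fieldDeriv_comp_apply (f := fun z : ℝ × ℝ => z.1 ^ 2 + z.2 ^ 2) hρ hq,
    fieldDeriv_rotField_sq_add_sq]
  simp [F, ρ, div_eq_mul_inv, add_assoc]

/-- linearization along the rotation field: if `ū` is C³ and solves the chart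
form of the mean field equation, then `φ = y₁∂₂ū − y₂∂₁ū` solves
`Δφ + 4λ e^{ū} φ/(1+|y|²)² = 0`. -/
theorem rotation_derivative_solves_linearized (lam : ℝ) (ub : ℝ × ℝ → ℝ)
    (hub : ContDiff ℝ 3 ub)
    (heq : ∀ y : ℝ × ℝ,
      lap ub y = 4 * lam * (1 - Real.exp (ub y)) / (1 + y.1 ^ 2 + y.2 ^ 2) ^ 2) :
    ∀ y : ℝ × ℝ,
      lap (fun z => z.1 * fderiv ℝ ub z (0, 1) - z.2 * fderiv ℝ ub z (1, 0)) y
        + 4 * lam * Real.exp (ub y)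
            * (y.1 * fderiv ℝ ub y (0, 1) - y.2 * fderiv ℝ ub y (1, 0))
            / (1 + y.1 ^ 2 + y.2 ^ 2) ^ 2 = 0 := by
  intro y
  have hφ : (fun z : ℝ × ℝ => z.1 * fderiv ℝ ub z (0, 1) - z.2 * fderiv ℝ ub z (1, 0)) =
      fieldDeriv rotField ub :=
    funext fun z => (fieldDeriv_rotField_apply ub z).symm
  rw [hφ, lap_fieldDeriv_rotField hub, show lap ub = _ from funext heq,
    fieldDeriv_rotField_meanFieldRhs (hub.differentiable (by norm_num) y),
    fieldDeriv_rotField_apply]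
  ring
end
end
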